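/- Let M ≥ 1 and k be integers with 0 ≤ k ≤ M − 1, let E be a finite set, and for each e ∈ E let X_e be a finite set with a distinguished element 0_e and let u_e, w_e ∈ X_e^M. Assume: (i) u_{e,m} = 0_e and w_{e,m} = 0_e for every e ∈ E and every m with 1 ≤ m ≤ k; (ii) for every m with k < m ≤ M, the quantity |{e ∈ E : u_{e,m} ≠ 0_e}| + |{e ∈ E : w_{e,m} ≠ 0_e}| is at least 2; (iii) for every e ∈ E, the vectors u_e and w_e have the same type. Then ∏_{e ∈ E} mult(u_e) ≥ C(M, k), where C(M, k) denotes the binomial coefficient 'M choose k'. -/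

import Mathlib

open scoped BigOperators

/-!
Let `n_e` be the number of coordinates of `u_e` different from `0_e`; since `u_e` and `w_e`
have the same type it is also that of `w_e`. By (i) every `n_e ≤ M - k`, and counting the
non-zero coordinates of all the `u_e` and `w_e` column by column, (ii) gives `2 ∑ n_e ≥ 2 (M - k)`.
Binomial coefficients are submultiplicative in the sense `C(M, c) ≤ C(M, a) C(M, b)` for
`a, b ≤ c ≤ a + b`, whence `C(M, M - k) ≤ ∏ C(M, n_e)`; finally `C(M, n_e) ≤ mult(u_e)`, because
merging all symbols other than `0_e` into one can only decrease a multinomial coefficient.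
-/

/-- Number of occurrences of `x` in the vector `v`. -/
def occCount {X : Type} [DecidableEq X] {M : ℕ} (v : Fin M → X) (x : X) : ℕ :=
  (Finset.univ.filter (fun m => v m = x)).card

/-- Multinomial coefficient of a vector: `M! / ∏_x (c_v(x)!)`. -/
def multinom {X : Type} [Fintype X] [DecidableEq X] {M : ℕ} (v : Fin M → X) : ℕ :=
  M.factorial / ∏ x : X, (occCount v x).factorial

open Finset

namespace Nat

theorem choose_le_choose_add_add (n r d : ℕ) : n.choose r ≤ (n + d).choose (r + d) := by
  induction d with
  | zero => rfl
  | succ d ih =>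
    rw [← Nat.add_assoc, ← Nat.add_assoc, choose_succ_succ]
    exact ih.trans (Nat.le_add_right _ _)

/-- Choosing a `c`-subset of `M` elements amounts to choosing an `a`-subset and then a
`(c - a)`-subset of the remaining `M - a`, and `c - a ≤ b`. -/
theorem choose_le_choose_mul_choose {M a b c : ℕ} (ha : a ≤ c) (hb : b ≤ c) (hc : c ≤ a + b) :
    M.choose c ≤ M.choose a * M.choose b := by
  obtain hMa | haM := lt_or_ge M a
  · rw [choose_eq_zero_of_lt (hMa.trans_le ha)]
    exact Nat.zero_le _
  have hrest : (M - a).choose (c - a) ≤ M.choose b :=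
    calc (M - a).choose (c - a)
        ≤ (M - a + (b - (c - a))).choose (c - a + (b - (c - a))) :=
          choose_le_choose_add_add _ _ _
      _ = (M - a + (b - (c - a))).choose b := by rw [Nat.add_sub_cancel' (by omega)]
      _ ≤ M.choose b := choose_le_choose b (by omega)
  calc M.choose c ≤ M.choose c * c.choose a := Nat.le_mul_of_pos_right _ (choose_pos ha)
    _ = M.choose a * (M - a).choose (c - a) := choose_mul ha
    _ ≤ M.choose a * M.choose b := Nat.mul_le_mul_left _ hrest

theorem choose_min_sum_le_prod_choose {ι : Type*} {M t : ℕ} {s : Finset ι} {n : ι → ℕ}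
    (hn : ∀ i ∈ s, n i ≤ t) : M.choose (min (∑ i ∈ s, n i) t) ≤ ∏ i ∈ s, M.choose (n i) := by
  classical
  induction s using Finset.induction_on with
  | empty => simp
  | insert a s ha ih =>
    rw [sum_insert ha, prod_insert ha]
    have hna := hn a (mem_insert_self a s)
    calc M.choose (min (n a + ∑ i ∈ s, n i) t)
        ≤ M.choose (n a) * M.choose (min (∑ i ∈ s, n i) t) :=
          choose_le_choose_mul_choose (by omega) (by omega) (by omega)
      _ ≤ M.choose (n a) * ∏ i ∈ s, M.choose (n i) :=
          Nat.mul_le_mul_left _ (ih fun i hi => hn i (mem_insert_of_mem hi))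

theorem choose_le_prod_choose {ι : Type*} {M t : ℕ} {s : Finset ι} {n : ι → ℕ}
    (hn : ∀ i ∈ s, n i ≤ t) (ht : t ≤ ∑ i ∈ s, n i) : M.choose t ≤ ∏ i ∈ s, M.choose (n i) := by
  simpa [min_eq_right ht] using choose_min_sum_le_prod_choose (M := M) hn

end Nat

theorem Fin.card_filter_le_val {n k : ℕ} : #{i : Fin n | k ≤ (i : ℕ)} = n - k := by
  have := card_filter_add_card_filter_not (s := univ) (fun i : Fin n => (i : ℕ) < k)
  simp only [Fin.card_filter_val_lt, not_lt, card_univ, Fintype.card_fin] at this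
  omega

theorem two_mul_sub_le_sum_card_filter {E : Type*} [Fintype E] {M k : ℕ}
    (p q : E → Fin M → Prop) [∀ e m, Decidable (p e m)] [∀ e m, Decidable (q e m)]
    (h : ∀ m : Fin M, k ≤ (m : ℕ) → 2 ≤ #{e | p e m} + #{e | q e m}) :
    2 * (M - k) ≤ ∑ e, (#{m | p e m} + #{m | q e m}) :=
  calc 2 * (M - k) = ∑ m ∈ univ.filter (fun m : Fin M => k ≤ (m : ℕ)), 2 := by
        rw [sum_const, Fin.card_filter_le_val, smul_eq_mul, mul_comm]
    _ ≤ ∑ m ∈ univ.filter (fun m : Fin M => k ≤ (m : ℕ)), (#{e | p e m} + #{e | q e m}) :=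
        sum_le_sum fun m hm => h m (mem_filter.1 hm).2
    _ ≤ ∑ m, (#{e | p e m} + #{e | q e m}) := sum_le_sum_of_subset (filter_subset _ _)
    _ = ∑ e, (#{m | p e m} + #{m | q e m}) := by
        simp only [card_filter, ← sum_add_distrib]
        exact sum_comm

section Vectors

variable {X : Type} [DecidableEq X] {M : ℕ}

theorem sum_occCount [Fintype X] (v : Fin M → X) : ∑ x, occCount v x = M := by
  simpa [occCount] using sum_card_fiberwise_eq_card_filter univ univ v

theorem occCount_le (v : Fin M → X) (x : X) : occCount v x ≤ M :=
  (card_filter_le _ _).trans_eq (card_fin M)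

theorem card_filter_ne_eq_sub_occCount (v : Fin M → X) (x : X) :
    #{m | v m ≠ x} = M - occCount v x := by
  have := card_filter_add_card_filter_not (s := univ) (fun m => v m = x)
  simp only [card_univ, Fintype.card_fin] at this
  simp only [occCount, ne_eq]
  omega

theorem le_occCount_of_forall_lt {v : Fin M → X} {x : X} {k : ℕ} (hk : k ≤ M)
    (h : ∀ m : Fin M, (m : ℕ) < k → v m = x) : k ≤ occCount v x :=
  calc k = #{m : Fin M | (m : ℕ) < k} := by rw [Fin.card_filter_val_lt, min_eq_right hk]
    _ ≤ occCount v x := card_le_card fun m hm => by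
        simp only [mem_filter, mem_univ, true_and] at hm ⊢
        exact h m hm

theorem multinom_eq_multinomial [Fintype X] (v : Fin M → X) :
    multinom v = Nat.multinomial univ (occCount v) := by
  rw [multinom, Nat.multinomial, sum_occCount]

theorem choose_occCount_le_multinom [Fintype X] (v : Fin M → X) (x : X) :
    M.choose (occCount v x) ≤ multinom v := by
  rw [multinom_eq_multinomial, ← insert_erase (mem_univ x),
    Nat.multinomial_insert (notMem_erase x univ), add_sum_erase _ _ (mem_univ x), sum_occCount]
  exact Nat.le_mul_of_pos_right _ (Nat.multinomial_pos _ _)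

theorem choose_sub_occCount_le_multinom [Fintype X] (v : Fin M → X) (x : X) :
    M.choose (M - occCount v x) ≤ multinom v := by
  rw [Nat.choose_symm (occCount_le v x)]
  exact choose_occCount_le_multinom v x

end Vectors

theorem stmt7_general {E : Type} [Fintype E] (M k : ℕ)
    (X : E → Type) [∀ e, Fintype (X e)] [∀ e, DecidableEq (X e)]
    (x0 : (e : E) → X e)
    (u w : (e : E) → Fin M → X e)
    (h1 : ∀ (e : E) (m : Fin M), (m : ℕ) < k → u e m = x0 e ∧ w e m = x0 e)
    (h2 : ∀ m : Fin M, k ≤ (m : ℕ) →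
      2 ≤ (Finset.univ.filter (fun e : E => u e m ≠ x0 e)).card +
          (Finset.univ.filter (fun e : E => w e m ≠ x0 e)).card)
    (h3 : ∀ (e : E) (x : X e), occCount (u e) x = occCount (w e) x) :
    Nat.choose M k ≤ ∏ e : E, multinom (u e) := by
  obtain hMk | hkM := lt_or_ge M k
  · rw [Nat.choose_eq_zero_of_lt hMk]
    exact Nat.zero_le _
  have hn_le : ∀ e ∈ univ, M - occCount (u e) (x0 e) ≤ M - k := fun e _ =>
    Nat.sub_le_sub_left (le_occCount_of_forall_lt hkM fun m hm => (h1 e m hm).1) M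
  have hn_sum : M - k ≤ ∑ e, (M - occCount (u e) (x0 e)) := by
    have := two_mul_sub_le_sum_card_filter _ _ h2
    simp only [card_filter_ne_eq_sub_occCount, ← h3, sum_add_distrib] at this
    omega
  calc M.choose k = M.choose (M - k) := (Nat.choose_symm hkM).symm
    _ ≤ ∏ e, M.choose (M - occCount (u e) (x0 e)) := Nat.choose_le_prod_choose hn_le hn_sum
    _ ≤ ∏ e, multinom (u e) := prod_le_prod' fun e _ => choose_sub_occCount_le_multinom _ _

theorem stmt7 {E : Type} [Fintype E] (M k : ℕ) (hM : 1 ≤ M) (hk : k ≤ M - 1)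
    (X : E → Type) [∀ e, Fintype (X e)] [∀ e, DecidableEq (X e)]
    (x0 : (e : E) → X e)
    (u w : (e : E) → Fin M → X e)
    (h1 : ∀ (e : E) (m : Fin M), (m : ℕ) < k → u e m = x0 e ∧ w e m = x0 e)
    (h2 : ∀ m : Fin M, k ≤ (m : ℕ) →
      2 ≤ (Finset.univ.filter (fun e : E => u e m ≠ x0 e)).card +
          (Finset.univ.filter (fun e : E => w e m ≠ x0 e)).card)
    (h3 : ∀ (e : E) (x : X e), occCount (u e) x = occCount (w e) x) :
    Nat.choose M k ≤ ∏ e : E, multinom (u e) :=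
  stmt7_general M k X x0 u w h1 h2 h3
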